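/- arXiv:1201.4687 — 2 statements merged into one kernel-verified Lean document; each statement's English description precedes it below -/
import Mathlib

section
/- Let G be a Hausdorff topological group and N a compact normal subgroup. Then the quotient map p_N : (G, E_{C(G)}) → (G/N, E_{C(G/N)}) is a coarse equivalence. -/
open Set Pointwise

/-- A coarse structure on `X`: a collection of entourages containing the diagonal,
closed under subsets, finite unions, inverses and compositions. -/
def IsCoarse {X : Type*} (E : Set (Set (X × X))) : Prop :=
  ({p : X × X | p.1 = p.2} ∈ E) ∧
  (∀ A ∈ E, ∀ B : Set (X × X), B ⊆ A → B ∈ E) ∧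
  (∀ A ∈ E, ∀ B ∈ E, A ∪ B ∈ E) ∧
  (∀ A ∈ E, Prod.swap '' A ∈ E) ∧
  (∀ A ∈ E, ∀ B ∈ E, {p : X × X | ∃ y, (p.1, y) ∈ A ∧ (y, p.2) ∈ B} ∈ E)

/-- `G(A × B)`: the `G`-saturation of `A × B` under the diagonal left action. -/
def GProd {G : Type*} [Group G] (A B : Set G) : Set (G × G) :=
  {p | ∃ g : G, ∃ a ∈ A, ∃ b ∈ B, p = (g * a, g * b)}

/-- A subset of `G × G` is `G`-invariant for the diagonal left action. -/
def GInvariant {G : Type*} [Group G] (E : Set (G × G)) : Prop :=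
  ∀ g : G, ∀ p ∈ E, (g * p.1, g * p.2) ∈ E

/-- The coarse structure associated to a family `F` of subsets of a group `G`. -/
def EF {G : Type*} [Group G] (F : Set (Set G)) : Set (Set (G × G)) :=
  {E | ∃ A ∈ F, E ⊆ GProd A A}

/-- A generating family for a compatible coarse structure on a group `G`. -/
structure IsGenFamily {G : Type*} [Group G] (F : Set (Set G)) : Prop where
  exists_nonempty : ∃ A ∈ F, A.Nonempty
  union_mem : ∀ A ∈ F, ∀ B ∈ F, A ∪ B ∈ F
  mul_mem : ∀ A ∈ F, ∀ B ∈ F, A * B ∈ F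
  inv_mem : ∀ A ∈ F, A⁻¹ ∈ F

/-- Image of an entourage under the shear map `(x, y) ↦ y⁻¹ * x`. -/
def shearImage {G : Type*} [Group G] (E : Set (G × G)) : Set G :=
  (fun p : G × G => p.2⁻¹ * p.1) '' E

/-- The family of shear-map images of the entourages of `E`. -/
def FofE {G : Type*} [Group G] (E : Set (Set (G × G))) : Set (Set G) :=
  shearImage '' E

/-- The completion of a family of subsets of `G`. -/
def hatF {G : Type*} (F : Set (Set G)) : Set (Set G) :=
  {A | ∃ B ∈ F, A ⊆ B}

/-- A family `U` of subsets of `X` is `L`-disjoint. -/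
def LDisjoint {X : Type*} (L : Set (X × X)) (U : Set (Set X)) : Prop :=
  ∀ A ∈ U, ∀ B ∈ U, A ≠ B → ∀ a ∈ A, ∀ b ∈ B, (a, b) ∉ L

/-- A family `U` of subsets of `X` is uniformly bounded for the coarse structure `E`. -/
def UnifBounded {X : Type*} (E : Set (Set (X × X))) (U : Set (Set X)) : Prop :=
  ∃ M ∈ E, ∀ A ∈ U, A ×ˢ A ⊆ M

/-- `asdimLE E n` : the asymptotic dimension of the coarse structure `E` is at most `n`. -/
def asdimLE {X : Type*} (E : Set (Set (X × X))) (n : ℕ) : Prop :=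
  ∀ L ∈ E, ∃ U : Fin (n + 1) → Set (Set X),
    (⋃ i, ⋃₀ U i) = Set.univ ∧ (∀ i, LDisjoint L (U i)) ∧ UnifBounded E (⋃ i, U i)

/-- A coarsely uniform (bornologous) map between coarse spaces. -/
def CoarselyUniform {X Y : Type*} (E : Set (Set (X × X))) (E' : Set (Set (Y × Y)))
    (f : X → Y) : Prop :=
  ∀ A ∈ E, Prod.map f f '' A ∈ E'

/-- Two maps into a coarse space are close. -/
def Close {S X : Type*} (E : Set (Set (X × X))) (p q : S → X) : Prop :=
  {r : X × X | ∃ s : S, r = (p s, q s)} ∈ E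

/-- A coarse embedding between coarse spaces. -/
def CoarseEmbedding {X Y : Type*} (E : Set (Set (X × X))) (E' : Set (Set (Y × Y)))
    (f : X → Y) : Prop :=
  CoarselyUniform E E' f ∧ ∀ A ∈ E', Prod.map f f ⁻¹' A ∈ E

/-- A bounded subset of a coarse space: a set of the form `A(x)`. -/
def IsBddSet {X : Type*} (E : Set (Set (X × X))) (B : Set X) : Prop :=
  ∃ A ∈ E, ∃ x : X, B = {y | (y, x) ∈ A}

/-- A coarse space is connected if every point of `X × X` lies in some entourage. -/
def ConnectedCoarse {X : Type*} (E : Set (Set (X × X))) : Prop :=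
  ∀ p : X × X, ∃ A ∈ E, p ∈ A

/-- The family `F|_H = { A ∩ H : A ∈ F }`, viewed as subsets of the subgroup `H`. -/
def restrictFamily {G : Type*} [Group G] (F : Set (Set G)) (H : Subgroup G) : Set (Set H) :=
  (fun A => (Subtype.val ⁻¹' A : Set H)) '' F

/-! A continuous homomorphism maps `G(K × K)` into `G(f K × f K)`, so `p_N` is coarsely uniform.
Since `N` is compact, `p_N` is proper, so for a set-theoretic section `s` of `p_N` the
differences `s(x)⁻¹ s(y)` with `x⁻¹ y ∈ K⁻¹ K` stay in the compact set `p_N⁻¹(K⁻¹ K)`; hence `s`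
is coarsely uniform. Finally `s ∘ p_N` moves points within `N`-cosets and `p_N ∘ s = id`. -/

section GProd

variable {G : Type*} [Group G]

lemma inv_mul_mem_of_mem_GProd {A B : Set G} {p : G × G} (hp : p ∈ GProd A B) :
    p.1⁻¹ * p.2 ∈ A⁻¹ * B := by
  obtain ⟨g, a, ha, b, hb, rfl⟩ := hp
  simpa [mul_assoc] using Set.mul_mem_mul (Set.inv_mem_inv.mpr ha) hb

lemma mem_GProd_insert_one {B : Set G} {p : G × G} (hp : p.1⁻¹ * p.2 ∈ B) :
    p ∈ GProd (insert 1 B) (insert 1 B) :=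
  ⟨p.1, 1, mem_insert _ _, _, mem_insert_of_mem _ hp, by simp⟩

lemma image_prodMap_GProd_subset {H : Type*} [Group H] (f : G →* H) (A B : Set G) :
    Prod.map f f '' GProd A B ⊆ GProd (f '' A) (f '' B) := by
  rintro _ ⟨_, ⟨g, a, ha, b, hb, rfl⟩, rfl⟩
  exact ⟨f g, f a, mem_image_of_mem f ha, f b, mem_image_of_mem f hb, by simp⟩

end GProd

section CompactCoarseStructure

variable {G H : Type*} [Group G] [TopologicalSpace G] [Group H] [TopologicalSpace H]

lemma mem_EF_isCompact_of_inv_mul_mem {E : Set (G × G)} {K : Set G} (hK : IsCompact K)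
    (hE : ∀ p ∈ E, p.1⁻¹ * p.2 ∈ K) : E ∈ EF {K : Set G | IsCompact K} :=
  ⟨insert 1 K, hK.insert 1, fun p hp => mem_GProd_insert_one (hE p hp)⟩

lemma close_of_inv_mul_mem {S : Type*} {p q : S → G} {K : Set G} (hK : IsCompact K)
    (h : ∀ s, (p s)⁻¹ * q s ∈ K) : Close (EF {K : Set G | IsCompact K}) p q :=
  mem_EF_isCompact_of_inv_mul_mem hK (by rintro _ ⟨s, rfl⟩; exact h s)

lemma coarselyUniform_of_continuous (f : G →* H) (hf : Continuous f) :
    CoarselyUniform (EF {K : Set G | IsCompact K}) (EF {K : Set H | IsCompact K}) f := by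
  rintro E ⟨K, hK, hE⟩
  exact ⟨f '' K, hK.image hf, (image_mono hE).trans (image_prodMap_GProd_subset f K K)⟩

lemma coarselyUniform_of_rightInverse [IsTopologicalGroup H] (f : G →* H) (hf : IsProperMap f)
    {s : H → G} (hs : Function.RightInverse s f) :
    CoarselyUniform (EF {K : Set H | IsCompact K}) (EF {K : Set G | IsCompact K}) s := by
  rintro E ⟨K, hK, hE⟩
  refine mem_EF_isCompact_of_inv_mul_mem (hf.isCompact_preimage (hK.inv.mul hK)) ?_
  rintro _ ⟨p, hp, rfl⟩
  simpa [hs p.1, hs p.2] using inv_mul_mem_of_mem_GProd (hE hp)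

end CompactCoarseStructure

lemma QuotientGroup.isProperMap_mk {G : Type*} [Group G] [TopologicalSpace G]
    [IsTopologicalGroup G] {N : Subgroup G} (hN : IsCompact (N : Set G)) :
    IsProperMap ((↑) : G → G ⧸ N) := by
  refine isProperMap_iff_isClosedMap_and_compact_fibers.mpr
    ⟨continuous_mk, isClosedMap_coe hN, fun y => ?_⟩
  obtain ⟨x, rfl⟩ := mk_surjective y
  rw [← image_singleton, preimage_image_mk_eq_mul]
  exact isCompact_singleton.mul hN

theorem stmt_13_general {G : Type*} [Group G] [TopologicalSpace G] [IsTopologicalGroup G]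
    (N : Subgroup G) [N.Normal] (hN : IsCompact (N : Set G)) :
    CoarselyUniform (EF {K : Set G | IsCompact K}) (EF {K : Set (G ⧸ N) | IsCompact K})
      (QuotientGroup.mk : G → G ⧸ N) ∧
    ∃ ψ : G ⧸ N → G,
      CoarselyUniform (EF {K : Set (G ⧸ N) | IsCompact K}) (EF {K : Set G | IsCompact K}) ψ ∧
      Close (EF {K : Set G | IsCompact K}) (ψ ∘ (QuotientGroup.mk : G → G ⧸ N)) id ∧
      Close (EF {K : Set (G ⧸ N) | IsCompact K}) ((QuotientGroup.mk : G → G ⧸ N) ∘ ψ) id := by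
  refine ⟨coarselyUniform_of_continuous (QuotientGroup.mk' N) QuotientGroup.continuous_mk,
    Quotient.out, ?_, ?_, ?_⟩
  · exact coarselyUniform_of_rightInverse (QuotientGroup.mk' N)
      (QuotientGroup.isProperMap_mk hN) QuotientGroup.out_eq'
  · exact close_of_inv_mul_mem hN fun x => QuotientGroup.eq.mp (QuotientGroup.out_eq' _)
  · exact close_of_inv_mul_mem (K := {1}) isCompact_singleton fun y => by simp

theorem stmt_13 {G : Type*} [Group G] [TopologicalSpace G] [IsTopologicalGroup G] [T2Space G]
    (N : Subgroup G) [N.Normal] (hN : IsCompact (N : Set G)) :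
    CoarselyUniform (EF {K : Set G | IsCompact K}) (EF {K : Set (G ⧸ N) | IsCompact K})
      (QuotientGroup.mk : G → G ⧸ N) ∧
    ∃ ψ : G ⧸ N → G,
      CoarselyUniform (EF {K : Set (G ⧸ N) | IsCompact K}) (EF {K : Set G | IsCompact K}) ψ ∧
      Close (EF {K : Set G | IsCompact K}) (ψ ∘ (QuotientGroup.mk : G → G ⧸ N)) id ∧
      Close (EF {K : Set (G ⧸ N) | IsCompact K}) ((QuotientGroup.mk : G → G ⧸ N) ∘ ψ) id :=
  stmt_13_general N hN
end

section
/- Let G be a group with generating family F such that (G, E_F) is connected, and let H be a collection of subgroups of G with the property that every K ∈ F is contained in some H ∈ H. Then asdim(G, E_F) = sup{ asdim(H, E_{F|_H}) : H ∈ H }. -/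
open Set Pointwise

/-! An entourage `G(A × A)` with `A ⊆ H` never joins two cosets of `H`, and on a single coset
`gH` it is the translate of `H(A × A)`. So `asdim G ≤ sup asdim H` follows by copying a cover
of `H` to every coset along fixed representatives, while `asdim H ≤ asdim G` because the
inclusion `H → G` is a coarse embedding. -/

section GProd

variable {G : Type*} [Group G]

theorem gInvariant_GProd (A B : Set G) : GInvariant (GProd A B) := by
  rintro c _ ⟨g, a, ha, b, hb, rfl⟩
  exact ⟨c * g, a, ha, b, hb, by simp [mul_assoc]⟩

theorem mem_GProd_of_inv_mul_mem {C : Set G} {x y : G} (hxy : y⁻¹ * x ∈ C) (hC : (1 : G) ∈ C) :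
    (x, y) ∈ GProd C C :=
  ⟨y, _, hxy, 1, hC, by simp⟩

theorem inv_mul_mem_of_mem_GProd_s17 {A B : Set G} {x y : G} (h : (x, y) ∈ GProd A B) :
    y⁻¹ * x ∈ B⁻¹ * A := by
  obtain ⟨g, a, ha, b, hb, hp⟩ := h
  obtain ⟨rfl, rfl⟩ := Prod.ext_iff.mp hp
  simpa [mul_assoc] using Set.mul_mem_mul (Set.inv_mem_inv.mpr hb) ha

theorem val_mem_GProd {H : Subgroup G} {A B : Set G} {p : H × H}
    (hp : p ∈ GProd (Subtype.val ⁻¹' A : Set H) (Subtype.val ⁻¹' B)) :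
    ((p.1 : G), (p.2 : G)) ∈ GProd A B := by
  obtain ⟨g, a, ha, b, hb, rfl⟩ := hp
  exact ⟨g, a, ha, b, hb, by simp⟩

/-- The translating element `g = h₁ a⁻¹` is forced into `H` because `A ⊆ H`. -/
theorem mem_GProd_of_val_mem {H : Subgroup G} {A B : Set G} (hA : A ⊆ H) (hB : B ⊆ H)
    {h₁ h₂ : H} (h : ((h₁ : G), (h₂ : G)) ∈ GProd A B) :
    (h₁, h₂) ∈ GProd (Subtype.val ⁻¹' A : Set H) (Subtype.val ⁻¹' B) := by
  obtain ⟨g, a, ha, b, hb, hp⟩ := h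
  have e₁ : (h₁ : G) = g * a := congrArg Prod.fst hp
  have e₂ : (h₂ : G) = g * b := congrArg Prod.snd hp
  have hg : g ∈ H := by
    simpa [e₁] using H.mul_mem h₁.2 (H.inv_mem (hA ha))
  refine ⟨⟨g, hg⟩, ⟨a, hA ha⟩, ha, ⟨b, hB hb⟩, hb, ?_⟩
  ext <;> simp [e₁, e₂]

theorem mk_eq_mk_of_mem_GProd {H : Subgroup G} {A : Set G} (hA : A ⊆ H) {s t : G}
    (h : (s, t) ∈ GProd A A) : (s : G ⧸ H) = t := by
  obtain ⟨g, a, ha, b, hb, hp⟩ := h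
  obtain ⟨rfl, rfl⟩ := Prod.ext_iff.mp hp
  rw [QuotientGroup.mk_mul_of_mem g (hA ha), QuotientGroup.mk_mul_of_mem g (hA hb)]

end GProd

theorem LDisjoint.mono {X : Type*} {L L' : Set (X × X)} {U : Set (Set X)}
    (hU : LDisjoint L U) (hL : L' ⊆ L) : LDisjoint L' U :=
  fun A hA B hB hAB a ha b hb hab => hU A hA B hB hAB a ha b hb (hL hab)

theorem CoarseEmbedding.asdimLE {X Y : Type*} {E : Set (Set (X × X))}
    {E' : Set (Set (Y × Y))} {f : X → Y} (hf : CoarseEmbedding E E' f) {n : ℕ}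
    (hY : asdimLE E' n) : asdimLE E n := by
  intro L hL
  obtain ⟨U, hcov, hdisj, M, hM, hbdd⟩ := hY _ (hf.1 L hL)
  refine ⟨fun i => preimage f '' U i, ?_, ?_, Prod.map f f ⁻¹' M, hf.2 M hM, ?_⟩
  · rw [eq_univ_iff_forall]
    intro x
    obtain ⟨i, S, hS, hx⟩ := by simpa using hcov.ge (mem_univ (f x))
    exact mem_iUnion.mpr ⟨i, f ⁻¹' S, mem_image_of_mem _ hS, hx⟩
  · rintro i _ ⟨S, hS, rfl⟩ _ ⟨T, hT, rfl⟩ hST a ha b hb hab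
    exact hdisj i S hS T hT (fun h => hST (h ▸ rfl)) (f a) ha (f b) hb ⟨(a, b), hab, rfl⟩
  · rintro _ hS' p ⟨hp₁, hp₂⟩
    obtain ⟨i, S, hS, rfl⟩ := mem_iUnion.mp hS'
    exact hbdd S (mem_iUnion.mpr ⟨i, hS⟩) ⟨hp₁, hp₂⟩

/-- A pair `(x, y)` of `G(B × B)` lies in `H(B⁻¹B × B⁻¹B)` as `(y (y⁻¹x), y 1)`. -/
theorem coarseEmbedding_subtype_val {G : Type*} [Group G] {F : Set (Set G)} (hF : IsGenFamily F)
    (H : Subgroup G) : CoarseEmbedding (EF (restrictFamily F H)) (EF F) Subtype.val := by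
  constructor
  · rintro L ⟨_, ⟨A, hA, rfl⟩, hL⟩
    refine ⟨A, hA, ?_⟩
    rintro _ ⟨p, hp, rfl⟩
    exact val_mem_GProd (hL hp)
  · rintro M ⟨B, hB, hM⟩
    refine ⟨_, ⟨B⁻¹ * B, hF.mul_mem _ (hF.inv_mem B hB) _ hB, rfl⟩, ?_⟩
    rintro ⟨x, y⟩ hxy
    obtain ⟨-, -, -, b₂, hb₂, -⟩ := hM hxy
    refine mem_GProd_of_inv_mul_mem ?_ ?_
    · simpa using inv_mul_mem_of_mem_GProd_s17 (hM hxy)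
    · simpa using Set.mul_mem_mul (Set.inv_mem_inv.mpr hb₂) hb₂

section CosetLifts

variable {G : Type*} [Group G] {H : Subgroup G}

/-- One translate of `U` per left coset of `H`; translating by every element of the coset
instead would destroy `L`-disjointness. -/
def cosetLifts (H : Subgroup G) (U : Set (Set H)) : Set (Set G) :=
  ⋃ q : G ⧸ H, (fun T : Set H => (fun h : H => q.out * h) '' T) '' U

theorem mem_cosetLifts {U : Set (Set H)} {S : Set G} :
    S ∈ cosetLifts H U ↔ ∃ q : G ⧸ H, ∃ T ∈ U, (fun h : H => q.out * h) '' T = S := by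
  simp [cosetLifts]

theorem iUnion_sUnion_cosetLifts {ι : Type*} {U : ι → Set (Set H)}
    (hU : ⋃ i, ⋃₀ U i = univ) : ⋃ i, ⋃₀ cosetLifts H (U i) = univ := by
  rw [eq_univ_iff_forall]
  intro g
  set q : G ⧸ H := QuotientGroup.mk g
  have hg : q.out⁻¹ * g ∈ H := QuotientGroup.eq.mp (QuotientGroup.out_eq' q)
  obtain ⟨i, T, hT, hgT⟩ := by simpa using hU.ge (mem_univ (⟨_, hg⟩ : H))
  exact mem_iUnion.mpr ⟨i, _, mem_cosetLifts.mpr ⟨q, T, hT, rfl⟩, ⟨_, hgT, by simp⟩⟩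

/-- Points of `G(A × A)` lie in one coset, and the common representative cancels. -/
theorem LDisjoint.cosetLifts {A : Set G} (hA : A ⊆ H) {U : Set (Set H)}
    (hU : LDisjoint (GProd (Subtype.val ⁻¹' A) (Subtype.val ⁻¹' A)) U) :
    LDisjoint (GProd A A) (cosetLifts H U) := by
  intro S hS T hT hST s hs t ht hst
  obtain ⟨q, S₀, hS₀, rfl⟩ := mem_cosetLifts.mp hS
  obtain ⟨q', T₀, hT₀, rfl⟩ := mem_cosetLifts.mp hT
  obtain ⟨h₁, hh₁, rfl⟩ := hs
  obtain ⟨h₂, hh₂, rfl⟩ := ht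
  have hq : q = q' := by
    simpa [QuotientGroup.mk_mul_of_mem _ h₁.2, QuotientGroup.mk_mul_of_mem _ h₂.2]
      using mk_eq_mk_of_mem_GProd (H := H) hA hst
  subst hq
  have hS₀T₀ : S₀ ≠ T₀ := fun h => hST (h ▸ rfl)
  have h₁₂ : ((h₁ : G), (h₂ : G)) ∈ GProd A A := by
    simpa using gInvariant_GProd A A q.out⁻¹ _ hst
  exact hU S₀ hS₀ T₀ hT₀ hS₀T₀ h₁ hh₁ h₂ hh₂ (mem_GProd_of_val_mem hA hA h₁₂)

theorem subset_GProd_of_mem_cosetLifts {B : Set G} {U : Set (Set H)}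
    (hU : ∀ T ∈ U, T ×ˢ T ⊆ GProd (Subtype.val ⁻¹' B) (Subtype.val ⁻¹' B)) :
    ∀ S ∈ cosetLifts H U, S ×ˢ S ⊆ GProd B B := by
  intro S hS
  obtain ⟨q, T, hT, rfl⟩ := mem_cosetLifts.mp hS
  rintro ⟨_, _⟩ ⟨⟨h₁, hh₁, rfl⟩, ⟨h₂, hh₂, rfl⟩⟩
  exact gInvariant_GProd B B q.out _ (val_mem_GProd (p := (h₁, h₂)) (hU T hT ⟨hh₁, hh₂⟩))

end CosetLifts

theorem exists_cover_of_asdimLE_restrictFamily {G : Type*} [Group G] {F : Set (Set G)}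
    {H : Subgroup G} {A : Set G} (hA : A ∈ F) (hAH : A ⊆ H) {n : ℕ}
    (hH : asdimLE (EF (restrictFamily F H)) n) {L : Set (G × G)} (hL : L ⊆ GProd A A) :
    ∃ U : Fin (n + 1) → Set (Set G),
      (⋃ i, ⋃₀ U i) = univ ∧ (∀ i, LDisjoint L (U i)) ∧ UnifBounded (EF F) (⋃ i, U i) := by
  obtain ⟨U, hcov, hdisj, _, ⟨_, ⟨B, hB, rfl⟩, hM⟩, hbdd⟩ :=
    hH _ ⟨_, ⟨A, hA, rfl⟩, subset_rfl⟩
  refine ⟨fun i => cosetLifts H (U i), iUnion_sUnion_cosetLifts hcov,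
    fun i => ((hdisj i).cosetLifts hAH).mono hL, GProd B B, ⟨B, hB, subset_rfl⟩, ?_⟩
  intro S hS
  obtain ⟨i, hS⟩ := mem_iUnion.mp hS
  exact subset_GProd_of_mem_cosetLifts
    (fun T hT => (hbdd T (mem_iUnion.mpr ⟨i, hT⟩)).trans hM) S hS

theorem stmt_17_general {G : Type*} [Group G] (F : Set (Set G)) (hF : IsGenFamily F)
    (𝓗 : Set (Subgroup G))
    (h𝓗 : ∀ K ∈ F, ∃ H ∈ 𝓗, K ⊆ (H : Set G)) (n : ℕ) :
    asdimLE (EF F) n ↔ ∀ H ∈ 𝓗, asdimLE (EF (restrictFamily F H)) n := by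
  refine ⟨fun hG H _ => (coarseEmbedding_subtype_val hF H).asdimLE hG, fun hH => ?_⟩
  rintro L ⟨A, hA, hL⟩
  obtain ⟨H, hH𝓗, hAH⟩ := h𝓗 A hA
  exact exists_cover_of_asdimLE_restrictFamily hA hAH (hH H hH𝓗) hL

theorem stmt_17 {G : Type*} [Group G] (F : Set (Set G)) (hF : IsGenFamily F)
    (hconn : ConnectedCoarse (EF F)) (𝓗 : Set (Subgroup G))
    (h𝓗 : ∀ K ∈ F, ∃ H ∈ 𝓗, K ⊆ (H : Set G)) (n : ℕ) :
    asdimLE (EF F) n ↔ ∀ H ∈ 𝓗, asdimLE (EF (restrictFamily F H)) n :=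
  stmt_17_general F hF 𝓗 h𝓗 n
end
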